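/- arXiv:1612.04859 — 2 statements merged into one kernel-verified Lean document; each statement's English description precedes it below -/
import Mathlib

section
/- For every smooth function u : ℝ × ℝ → ℝ of (t,x) (not assumed to solve any equation), set Δ = u_t − u_{txx} − u·u_{xxx} − 3·u_x·u_{xx} + u·u_x + u_x, and set T¹ = u − (5/3)·t·u_t and T² = −(2/3)·( u + (1/2)u² − u·u_{xx} − u_x² − u_{tx} ) − (5/3)·t·( u_t + u·u_t − u_t·u_{xx} − 2·u_x·u_{tx} − u·u_{txx} − u_{ttx} ). Then the identity ∂_t T¹ + ∂_x T² = −(2/3)·Δ − (5/3)·t·∂_t Δ holds at every point of ℝ². -/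
noncomputable def pt (f : ℝ × ℝ → ℝ) : ℝ × ℝ → ℝ :=
  fun q => deriv (fun s => f (s, q.2)) q.1

noncomputable def px (f : ℝ × ℝ → ℝ) : ℝ × ℝ → ℝ :=
  fun q => deriv (fun s => f (q.1, s)) q.2

section slices
variable {F : Type*} [NormedAddCommGroup F] [NormedSpace ℝ F]

lemma hasDerivAt_slice_t (f : ℝ × ℝ → F) (hf : Differentiable ℝ f) (q : ℝ × ℝ) :
    HasDerivAt (fun s => f (s, q.2)) (fderiv ℝ f q ((1 : ℝ), (0 : ℝ))) q.1 := by
  have h1 : HasDerivAt (fun s : ℝ => (s, q.2)) ((1 : ℝ), (0 : ℝ)) q.1 :=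
    (hasDerivAt_id q.1).prodMk (hasDerivAt_const q.1 q.2)
  exact (hf q).hasFDerivAt.comp_hasDerivAt q.1 h1

lemma hasDerivAt_slice_x (f : ℝ × ℝ → F) (hf : Differentiable ℝ f) (q : ℝ × ℝ) :
    HasDerivAt (fun s => f (q.1, s)) (fderiv ℝ f q ((0 : ℝ), (1 : ℝ))) q.2 := by
  have h1 : HasDerivAt (fun s : ℝ => (q.1, s)) ((0 : ℝ), (1 : ℝ)) q.2 :=
    (hasDerivAt_const q.2 q.1).prodMk (hasDerivAt_id q.2)
  exact (hf q).hasFDerivAt.comp_hasDerivAt q.2 h1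

end slices

lemma pt_eq (f : ℝ × ℝ → ℝ) (hf : ContDiff ℝ (⊤ : ℕ∞) f) :
    pt f = fun q => fderiv ℝ f q ((1 : ℝ), (0 : ℝ)) :=
  funext fun q => (hasDerivAt_slice_t f (hf.differentiable (by simp)) q).deriv

lemma px_eq (f : ℝ × ℝ → ℝ) (hf : ContDiff ℝ (⊤ : ℕ∞) f) :
    px f = fun q => fderiv ℝ f q ((0 : ℝ), (1 : ℝ)) :=
  funext fun q => (hasDerivAt_slice_x f (hf.differentiable (by simp)) q).deriv

lemma contDiff_pt (f : ℝ × ℝ → ℝ) (hf : ContDiff ℝ (⊤ : ℕ∞) f) : ContDiff ℝ (⊤ : ℕ∞) (pt f) := by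
  rw [pt_eq f hf]
  exact (hf.fderiv_right (by simp)).clm_apply contDiff_const

lemma contDiff_px (f : ℝ × ℝ → ℝ) (hf : ContDiff ℝ (⊤ : ℕ∞) f) : ContDiff ℝ (⊤ : ℕ∞) (px f) := by
  rw [px_eq f hf]
  exact (hf.fderiv_right (by simp)).clm_apply contDiff_const

lemma Ht (f : ℝ × ℝ → ℝ) (hf : ContDiff ℝ (⊤ : ℕ∞) f) (q : ℝ × ℝ) :
    HasDerivAt (fun s => f (s, q.2)) (pt f q) q.1 := by
  rw [pt_eq f hf]
  exact hasDerivAt_slice_t f (hf.differentiable (by simp)) q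

lemma Hx (f : ℝ × ℝ → ℝ) (hf : ContDiff ℝ (⊤ : ℕ∞) f) (q : ℝ × ℝ) :
    HasDerivAt (fun s => f (q.1, s)) (px f q) q.2 := by
  rw [px_eq f hf]
  exact hasDerivAt_slice_x f (hf.differentiable (by simp)) q

lemma ptpx_comm (f : ℝ × ℝ → ℝ) (hf : ContDiff ℝ (⊤ : ℕ∞) f) : px (pt f) = pt (px f) := by
  funext q
  have hdf : Differentiable ℝ f := hf.differentiable (by simp)
  have hf' : ContDiff ℝ (⊤ : ℕ∞) (fderiv ℝ f) := hf.fderiv_right (by simp)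
  have hdf' : Differentiable ℝ (fderiv ℝ f) := hf'.differentiable (by simp)
  have h1 : px (pt f) q = (fderiv ℝ (fderiv ℝ f) q ((0:ℝ),(1:ℝ))) ((1:ℝ),(0:ℝ)) := by
    rw [pt_eq f hf]
    have hs := hasDerivAt_slice_x (fderiv ℝ f) hdf' q
    have h2 := hs.clm_apply (hasDerivAt_const q.2 ((1:ℝ),(0:ℝ)))
    simpa [px] using h2.deriv
  have h2 : pt (px f) q = (fderiv ℝ (fderiv ℝ f) q ((1:ℝ),(0:ℝ))) ((0:ℝ),(1:ℝ)) := by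
    rw [px_eq f hf]
    have hs := hasDerivAt_slice_t (fderiv ℝ f) hdf' q
    have h2 := hs.clm_apply (hasDerivAt_const q.1 ((0:ℝ),(1:ℝ)))
    simpa [pt] using h2.deriv
  rw [h1, h2]
  exact second_derivative_symmetric (fun y => (hdf y).hasFDerivAt)
    ((hdf' q).hasFDerivAt) _ _

/-- For every smooth `u`, with `Δ` the Fornberg–Whitham expression, the divergence
identity `D_t T¹ + D_x T² = -(2/3)Δ - (5/3) t D_t Δ` holds everywhere. -/
theorem fw_divergence_identity (u : ℝ × ℝ → ℝ) (hu : ContDiff ℝ (⊤ : ℕ∞) u)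
    (Δ : ℝ × ℝ → ℝ)
    (hΔ : Δ = fun q => pt u q - pt (px (px u)) q - u q * px (px (px u)) q - 3 * px u q * px (px u) q + u q * px u q + px u q) :
    ∀ p : ℝ × ℝ,
      pt (fun q => u q - (5 / 3) * q.1 * pt u q) p
        + px (fun q => -(2 / 3) * (u q + (1 / 2) * u q ^ 2 - u q * px (px u) q
              - (px u q) ^ 2 - pt (px u) q)
            - (5 / 3) * q.1 * (pt u q + u q * pt u q - pt u q * px (px u) q
              - 2 * px u q * pt (px u) q - u q * pt (px (px u)) q - pt (pt (px u)) q)) p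
      = -(2 / 3) * Δ p - (5 / 3) * p.1 * pt Δ p := by
  intro p
  have hut : ContDiff ℝ (⊤ : ℕ∞) (pt u) := contDiff_pt u hu
  have hux : ContDiff ℝ (⊤ : ℕ∞) (px u) := contDiff_px u hu
  have huxx : ContDiff ℝ (⊤ : ℕ∞) (px (px u)) := contDiff_px _ hux
  have huxxx : ContDiff ℝ (⊤ : ℕ∞) (px (px (px u))) := contDiff_px _ huxx
  have hutx : ContDiff ℝ (⊤ : ℕ∞) (pt (px u)) := contDiff_pt _ hux
  have hutxx : ContDiff ℝ (⊤ : ℕ∞) (pt (px (px u))) := contDiff_pt _ huxx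
  have huttx : ContDiff ℝ (⊤ : ℕ∞) (pt (pt (px u))) := contDiff_pt _ hutx
  -- time derivative of T¹
  have h1 := (Ht u hu p).sub
    (((hasDerivAt_id' p.1).const_mul ((5:ℝ)/3)).mul (Ht (pt u) hut p))
  have e1 : pt (fun q => u q - (5 / 3) * q.1 * pt u q) p = _ := h1.deriv
  -- space derivative of T²
  have hA := ((((Hx u hu p).add (((Hx u hu p).pow 2).const_mul ((1:ℝ)/2))).sub
      ((Hx u hu p).mul (Hx (px (px u)) huxx p))).sub
      ((Hx (px u) hux p).pow 2)).sub (Hx (pt (px u)) hutx p)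
  have hB := (((((Hx (pt u) hut p).add ((Hx u hu p).mul (Hx (pt u) hut p))).sub
      ((Hx (pt u) hut p).mul (Hx (px (px u)) huxx p))).sub
      (((Hx (px u) hux p).const_mul (2:ℝ)).mul (Hx (pt (px u)) hutx p))).sub
      ((Hx u hu p).mul (Hx (pt (px (px u))) hutxx p))).sub
      (Hx (pt (pt (px u))) huttx p)
  have h2 := (hA.const_mul (-((2:ℝ)/3))).sub (hB.const_mul ((5:ℝ)/3 * p.1))
  have e2 : px (fun q => -(2 / 3) * (u q + (1 / 2) * u q ^ 2 - u q * px (px u) q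
              - (px u q) ^ 2 - pt (px u) q)
            - (5 / 3) * q.1 * (pt u q + u q * pt u q - pt u q * px (px u) q
              - 2 * px u q * pt (px u) q - u q * pt (px (px u)) q - pt (pt (px u)) q)) p
      = _ := h2.deriv
  -- time derivative of Δ
  have h3 := (((((Ht (pt u) hut p).sub (Ht (pt (px (px u))) hutxx p)).sub
      ((Ht u hu p).mul (Ht (px (px (px u))) huxxx p))).sub
      (((Ht (px u) hux p).const_mul (3:ℝ)).mul (Ht (px (px u)) huxx p))).add
      ((Ht u hu p).mul (Ht (px u) hux p))).add (Ht (px u) hux p)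
  have e3 : pt (fun q => pt u q - pt (px (px u)) q - u q * px (px (px u)) q
      - 3 * px u q * px (px u) q + u q * px u q + px u q) p = _ := h3.deriv
  rw [hΔ, e1, e2, e3]
  simp only [Prod.mk.eta, Nat.cast_ofNat, pow_one]
  norm_num
  rw [ptpx_comm u hu, ptpx_comm (px u) hux, ptpx_comm (pt (px u)) hutx,
    ptpx_comm (px (px u)) huxx, ptpx_comm (px u) hux]
  ring
end

section
/- First additional conservation law for one-dimensional polytropic gas dynamics with γ = (n+2)/n = 3 (n = 1): let ρ, u, p : ℝ × ℝ → ℝ be smooth functions of (t,x) satisfying, at every point, the Euler equations ρ_t + (ρu)_x = 0, ρ(u_t + u·u_x) + p_x = 0, p_t + u·p_x + 3·p·u_x = 0. Then ∂_t( t·(ρ·u² + p) − ρ·x·u ) + ∂_x( t·(ρ·u³ + 3·p·u) − x·(ρ·u² + p) ) = 0 at every point of ℝ². -/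
lemma hasDerivAt_pt (f : ℝ × ℝ → ℝ) (hf : ContDiff ℝ (⊤ : ℕ∞) f) (z : ℝ × ℝ) :
    HasDerivAt (fun s => f (s, z.2)) (pt f z) z.1 := by
  have hd : Differentiable ℝ (fun s : ℝ => f (s, z.2)) :=
    (hf.differentiable (by simp)).comp (differentiable_id.prodMk (differentiable_const _))
  exact (hd z.1).hasDerivAt

lemma hasDerivAt_px (f : ℝ × ℝ → ℝ) (hf : ContDiff ℝ (⊤ : ℕ∞) f) (z : ℝ × ℝ) :
    HasDerivAt (fun s => f (z.1, s)) (px f z) z.2 := by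
  have hd : Differentiable ℝ (fun s : ℝ => f (z.1, s)) :=
    (hf.differentiable (by simp)).comp ((differentiable_const _).prodMk differentiable_id)
  exact (hd z.2).hasDerivAt

/-- First additional conservation law for 1D polytropic gas dynamics with `γ = 3`. -/
theorem euler1d_additional_first (ρ u P : ℝ × ℝ → ℝ)
    (hρ : ContDiff ℝ (⊤ : ℕ∞) ρ) (hu : ContDiff ℝ (⊤ : ℕ∞) u) (hP : ContDiff ℝ (⊤ : ℕ∞) P)
    (h₁ : ∀ z : ℝ × ℝ, pt ρ z + px (fun q => ρ q * u q) z = 0)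
    (h₂ : ∀ z : ℝ × ℝ, ρ z * (pt u z + u z * px u z) + px P z = 0)
    (h₃ : ∀ z : ℝ × ℝ, pt P z + u z * px P z + 3 * P z * px u z = 0) :
    ∀ z : ℝ × ℝ,
      pt (fun q => q.1 * (ρ q * u q ^ 2 + P q) - ρ q * q.2 * u q) z
        + px (fun q => q.1 * (ρ q * u q ^ 3 + 3 * P q * u q)
            - q.2 * (ρ q * u q ^ 2 + P q)) z = 0 := by
  rintro ⟨t, x⟩
  have Hρt := hasDerivAt_pt ρ hρ (t, x)
  have Hut := hasDerivAt_pt u hu (t, x)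
  have HPt := hasDerivAt_pt P hP (t, x)
  have Hρx := hasDerivAt_px ρ hρ (t, x)
  have Hux := hasDerivAt_px u hu (t, x)
  have HPx := hasDerivAt_px P hP (t, x)
  have E1 := (((hasDerivAt_id t).mul ((Hρt.mul (Hut.pow 2)).add HPt)).sub
      ((Hρt.mul_const x).mul Hut)).deriv
  have E2 := ((((Hρx.mul (Hux.pow 3)).add ((HPx.const_mul 3).mul Hux)).const_mul t).sub
      ((hasDerivAt_id x).mul ((Hρx.mul (Hux.pow 2)).add HPx))).deriv
  simp only [id_eq, Pi.pow_apply] at E1 E2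
  push_cast at E1 E2
  have h1 : pt ρ (t, x) + (px ρ (t, x) * u (t, x) + ρ (t, x) * px u (t, x)) = 0 := by
    have e3 : px (fun q => ρ q * u q) (t, x)
        = px ρ (t, x) * u (t, x) + ρ (t, x) * px u (t, x) := (Hρx.mul Hux).deriv
    have h := h₁ (t, x)
    rw [e3] at h
    exact h
  have h2 := h₂ (t, x)
  have h3 := h₃ (t, x)
  rw [show pt (fun q => q.1 * (ρ q * u q ^ 2 + P q) - ρ q * q.2 * u q) (t, x) = _ from E1,
    show px (fun q => q.1 * (ρ q * u q ^ 3 + 3 * P q * u q)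
      - q.2 * (ρ q * u q ^ 2 + P q)) (t, x) = _ from E2]
  linear_combination (t * u (t, x) ^ 2 - x * u (t, x)) * h1
    + (2 * t * u (t, x) - x) * h2 + t * h3
end
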